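/- Let (X,p) be a 0-complete partial metric space and let T : X → X be continuous (with respect to the open p-balls) and satisfy p(Tx, T(Tx)) ≤ α·p(x,Tx) for all x ∈ X, where α ∈ (0,1). Then there exists z ∈ X such that p(z,z) = 0 and p(Tz,z) = p(Tz,Tz). -/

import Mathlib

open Filter Topology

/-- A partial metric on a type `X`. -/
structure IsPartialMetric {X : Type*} (p : X → X → ℝ) : Prop where
  nonneg : ∀ x y, 0 ≤ p x y
  symm : ∀ x y, p x y = p y x
  eq_of : ∀ x y, p x x = p x y → p x y = p y y → x = y
  self_le : ∀ x y, p x x ≤ p x y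
  triangle : ∀ x y z, p x z + p y y ≤ p x y + p y z

/-- A sequence `x` converges to `a` in the partial metric `p`:
`lim_{n→∞} p(a, x n) = p(a,a)`. -/
def PConverges {X : Type*} (p : X → X → ℝ) (x : ℕ → X) (a : X) : Prop :=
  Tendsto (fun n => p a (x n)) atTop (𝓝 (p a a))

/-- A sequence is `0`-Cauchy: `lim_{m,n→∞} p(x n, x m) = 0`. -/
def PZeroCauchy {X : Type*} (p : X → X → ℝ) (x : ℕ → X) : Prop :=
  Tendsto (fun mn : ℕ × ℕ => p (x mn.1) (x mn.2)) atTop (𝓝 0)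

/-- `(X,p)` is `0`-complete. -/
def PZeroComplete {X : Type*} (p : X → X → ℝ) : Prop :=
  ∀ x : ℕ → X, PZeroCauchy p x → ∃ a, PConverges p x a ∧ p a a = 0

/-- A set is sequentially closed with respect to `p`-convergence. -/
def SeqClosed {X : Type*} (p : X → X → ℝ) (A : Set X) : Prop :=
  ∀ (x : ℕ → X) (a : X), (∀ n, x n ∈ A) → PConverges p x a → a ∈ A

/-- A sequence is Cauchy in `(X,p)`: the double limit `lim_{m,n→∞} p(x n, x m)`
exists (finite). -/
def PCauchy {X : Type*} (p : X → X → ℝ) (x : ℕ → X) : Prop :=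
  ∃ L : ℝ, Tendsto (fun mn : ℕ × ℕ => p (x mn.1) (x mn.2)) atTop (𝓝 L)

/-- `(X,p)` is complete: every Cauchy sequence converges to some `a` with
`p(a,a) = lim_{m,n→∞} p(x n, x m)`. -/
def PComplete {X : Type*} (p : X → X → ℝ) : Prop :=
  ∀ x : ℕ → X, PCauchy p x → ∃ a, PConverges p x a ∧
    Tendsto (fun mn : ℕ × ℕ => p (x mn.1) (x mn.2)) atTop (𝓝 (p a a))

/-- Continuity of `T : X → X` with respect to the open `p`-balls. -/
def PMContinuous {X : Type*} (p : X → X → ℝ) (T : X → X) : Prop :=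
  ∀ x₀ : X, ∀ ε > (0:ℝ), ∃ δ > (0:ℝ), ∀ y,
    p x₀ y < p x₀ x₀ + δ → p (T x₀) (T y) < p (T x₀) (T x₀) + ε

/-- A set `A` is `0`-compact: every sequence in `A` has a subsequence converging
to some `a ∈ A` with `lim_{n→∞} p(x (k n), a) = p(a,a) = 0`. -/
def PZeroCompact {X : Type*} (p : X → X → ℝ) (A : Set X) : Prop :=
  ∀ x : ℕ → X, (∀ n, x n ∈ A) → ∃ (k : ℕ → ℕ) (a : X), StrictMono k ∧ a ∈ A ∧
    Tendsto (fun n => p (x (k n)) a) atTop (𝓝 (p a a)) ∧ p a a = 0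

/-!
The Picard iterates `xₙ = Tⁿ x₀` satisfy `p(xₙ, xₙ₊₁) ≤ αⁿ p(x₀, Tx₀)`, so the
partial-metric triangle inequality makes them `0`-Cauchy; let `z` be their limit,
so `p(z,z) = 0`. The sequence `xₙ₊₁ = T xₙ` converges both to `z` and, by
continuity, to `Tz`, and two limits `a`, `b` of one sequence always satisfy
`p(b,a) ≤ p(b,b) + p(a,a)`. With `p(z,z) = 0` this gives `p(Tz,z) ≤ p(Tz,Tz)`.
-/

namespace IsPartialMetric

variable {X : Type*} {p : X → X → ℝ}

theorem le_add (hp : IsPartialMetric p) (x y z : X) : p x z ≤ p x y + p y z := by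
  linarith [hp.triangle x y z, hp.nonneg y y]

theorem le_of_le_geometric (hp : IsPartialMetric p) {x : ℕ → X} {C α : ℝ}
    (hα0 : 0 ≤ α) (hα1 : α < 1) (hstep : ∀ n, p (x n) (x (n + 1)) ≤ C * α ^ n)
    (n k : ℕ) : p (x n) (x (n + k)) ≤ C * α ^ n / (1 - α) := by
  have h1α : 0 < 1 - α := by linarith
  have hC : 0 ≤ C := by simpa using (hp.nonneg _ _).trans (hstep 0)
  induction k generalizing n with
  | zero =>
    calc p (x n) (x (n + 0)) ≤ p (x n) (x (n + 1)) := hp.self_le _ _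
      _ ≤ C * α ^ n := hstep n
      _ ≤ C * α ^ n / (1 - α) :=
        le_div_self (by positivity) h1α (by linarith)
  | succ k ih =>
    calc p (x n) (x (n + (k + 1)))
        ≤ p (x n) (x (n + 1)) + p (x (n + 1)) (x (n + 1 + k)) := by
          rw [← add_assoc, add_right_comm]; exact hp.le_add _ _ _
      _ ≤ C * α ^ n + C * α ^ (n + 1) / (1 - α) := add_le_add (hstep n) (ih (n + 1))
      _ = C * α ^ n / (1 - α) := by field_simp; ring

theorem pZeroCauchy_of_le_geometric (hp : IsPartialMetric p) {x : ℕ → X} {C α : ℝ}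
    (hα0 : 0 ≤ α) (hα1 : α < 1) (hstep : ∀ n, p (x n) (x (n + 1)) ≤ C * α ^ n) :
    PZeroCauchy p x := by
  have hC : 0 ≤ C := by simpa using (hp.nonneg _ _).trans (hstep 0)
  have hbound : ∀ mn : ℕ × ℕ,
      p (x mn.1) (x mn.2) ≤ C / (1 - α) * (α ^ mn.1 + α ^ mn.2) := by
    have h1α : 0 < 1 - α := by linarith
    have key : ∀ m n, m ≤ n → p (x m) (x n) ≤ C / (1 - α) * (α ^ m + α ^ n) := by
      intro m n hmn
      obtain ⟨k, rfl⟩ := Nat.exists_eq_add_of_le hmn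
      calc p (x m) (x (m + k)) ≤ C * α ^ m / (1 - α) :=
            hp.le_of_le_geometric hα0 hα1 hstep m k
        _ ≤ C / (1 - α) * (α ^ m + α ^ (m + k)) := by
          rw [mul_div_right_comm]
          exact mul_le_mul_of_nonneg_left (by linarith [pow_nonneg hα0 (m + k)])
            (by positivity)
    rintro ⟨m, n⟩
    rcases le_total m n with hmn | hnm
    · exact key m n hmn
    · rw [hp.symm, add_comm]; exact key n m hnm
  have hpow : Tendsto (fun k : ℕ => α ^ k) atTop (𝓝 0) :=
    tendsto_pow_atTop_nhds_zero_of_lt_one hα0 hα1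
  have hlim : Tendsto (fun mn : ℕ × ℕ => C / (1 - α) * (α ^ mn.1 + α ^ mn.2)) atTop
      (𝓝 0) := by
    rw [← prod_atTop_atTop_eq]
    simpa using
      ((hpow.comp tendsto_fst).add (hpow.comp tendsto_snd)).const_mul (C / (1 - α))
  exact tendsto_of_tendsto_of_tendsto_of_le_of_le tendsto_const_nhds hlim
    (fun _ => hp.nonneg _ _) hbound

theorem le_add_of_pConverges (hp : IsPartialMetric p) {x : ℕ → X} {a b : X}
    (ha : PConverges p x a) (hb : PConverges p x b) : p b a ≤ p b b + p a a :=
  ge_of_tendsto' (hb.add ha) fun n => by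
    simpa only [hp.symm (x n) a] using hp.le_add b (x n) a

end IsPartialMetric

theorem PMContinuous.pConverges_comp {X : Type*} {p : X → X → ℝ} {T : X → X}
    (hp : IsPartialMetric p) (hT : PMContinuous p T) {x : ℕ → X} {a : X}
    (hx : PConverges p x a) : PConverges p (T ∘ x) (T a) := by
  refine tendsto_order.2 ⟨fun b hb => Eventually.of_forall fun n =>
    hb.trans_le (hp.self_le _ _), fun b hb => ?_⟩
  obtain ⟨δ, hδ, hball⟩ := hT a (b - p (T a) (T a)) (by linarith)
  filter_upwards [(tendsto_order.1 hx).2 _ (lt_add_of_pos_right _ hδ)] with n hn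
  simpa using hball (x n) hn

theorem iterate_succ_le_geometric {X : Type*} (p : X → X → ℝ) {T : X → X} {α : ℝ}
    (hα0 : 0 ≤ α) (hcontr : ∀ x, p (T x) (T (T x)) ≤ α * p x (T x)) (x₀ : X) (n : ℕ) :
    p (T^[n] x₀) (T^[n + 1] x₀) ≤ p x₀ (T x₀) * α ^ n := by
  induction n with
  | zero => simp
  | succ n ih =>
    calc p (T^[n + 1] x₀) (T^[n + 2] x₀) = p (T (T^[n] x₀)) (T (T (T^[n] x₀))) := by
          simp only [Function.iterate_succ_apply']
      _ ≤ α * p (T^[n] x₀) (T^[n + 1] x₀) := by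
          rw [Function.iterate_succ_apply']; exact hcontr _
      _ ≤ α * (p x₀ (T x₀) * α ^ n) := mul_le_mul_of_nonneg_left ih hα0
      _ = p x₀ (T x₀) * α ^ (n + 1) := by ring

/-- for a continuous map satisfying `p(Tx,T²x) ≤ α p(x,Tx)` on a
`0`-complete partial metric space there is `z` with `p(z,z) = 0` and
`p(Tz,z) = p(Tz,Tz)`. -/
theorem exists_point_of_iterated_contraction {X : Type*} [Nonempty X]
    (p : X → X → ℝ) (hp : IsPartialMetric p) (hcomp : PZeroComplete p)
    (T : X → X) (hT : PMContinuous p T)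
    (α : ℝ) (hα : α ∈ Set.Ioo (0:ℝ) 1)
    (hcontr : ∀ x, p (T x) (T (T x)) ≤ α * p x (T x)) :
    ∃ z, p z z = 0 ∧ p (T z) z = p (T z) (T z) := by
  obtain ⟨hα0, hα1⟩ := hα
  set x : ℕ → X := fun n => T^[n] (Classical.arbitrary X)
  have hcauchy : PZeroCauchy p x := hp.pZeroCauchy_of_le_geometric hα0.le hα1
    (iterate_succ_le_geometric p hα0.le hcontr _)
  obtain ⟨z, hz, hz0⟩ := hcomp x hcauchy
  have hTx : T ∘ x = fun n => x (n + 1) :=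
    funext fun n => (Function.iterate_succ_apply' T n _).symm
  have hTz : PConverges p (T ∘ x) (T z) := hT.pConverges_comp hp hz
  have hz' : PConverges p (T ∘ x) z := by
    rw [hTx]; exact hz.comp (tendsto_add_atTop_nat 1)
  refine ⟨z, hz0, le_antisymm ?_ (hp.self_le _ _)⟩
  simpa [hz0] using hp.le_add_of_pConverges hz' hTz
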